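/- arXiv:1612.07107 — 2 statements merged into one kernel-verified Lean document; each statement's English description precedes it below -/
import Mathlib

section
/- Let G be the subgroup of (ℂ*)^3 consisting of triples (γ1, γ2, s1) with γ1^2 γ2^{-3} = 1 and γ1 s1^2 = 1. Then the map λ ↦ (λ^6, λ^4, λ^{-3}) is a group isomorphism from ℂ* onto G. -/
/-!
In any commutative group the inverse map is `(γ₁, γ₂, s₁) ↦ γ₂ s₁`: for `t = γ₂ s₁` the
relations `γ₂³ = γ₁²` and `γ₁ s₁² = 1` give `t³ s₁ = γ₁² s₁⁴ = 1`, so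
`s₁ = t⁻³`, `γ₁ = s₁⁻² = t⁶` and `γ₂ = t s₁⁻¹ = t⁴`; conversely `t = t⁴ · t⁻³` is recovered
from the image.
-/

section

variable (G : Type*) [CommGroup G]

def zpowTripleHom : G →* G × G × G :=
  (zpowGroupHom 6).prod ((zpowGroupHom 4).prod (zpowGroupHom (-3)))

variable {G}

@[simp]
theorem zpowTripleHom_apply (t : G) :
    zpowTripleHom G t = (t ^ 6, t ^ 4, t ^ (-3 : ℤ)) := by
  simp [zpowTripleHom]

theorem zpowTripleHom_injective : Function.Injective (zpowTripleHom G) := by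
  intro a b h
  simp only [zpowTripleHom_apply, Prod.mk.injEq] at h
  obtain ⟨-, h4, h3⟩ := h
  calc a = a ^ 4 * a ^ (-3 : ℤ) := by group
    _ = b ^ 4 * b ^ (-3 : ℤ) := by rw [h4, h3]
    _ = b := by group

theorem mem_range_zpowTripleHom_iff {p : G × G × G} :
    p ∈ Set.range (zpowTripleHom G) ↔ p.1 ^ 2 * p.2.1 ^ (-3 : ℤ) = 1 ∧ p.1 * p.2.2 ^ 2 = 1 := by
  constructor
  · rintro ⟨t, rfl⟩
    simp only [zpowTripleHom_apply]
    constructor <;> group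
  · obtain ⟨g₁, g₂, s⟩ := p
    rintro ⟨h₁ : g₁ ^ 2 * g₂ ^ (-3 : ℤ) = 1, h₂ : g₁ * s ^ 2 = 1⟩
    have hg : g₂ ^ 3 = g₁ ^ 2 := by
      rw [zpow_neg, mul_inv_eq_one, zpow_ofNat] at h₁
      exact h₁.symm
    obtain ⟨t, ht⟩ : ∃ t, t = g₂ * s := ⟨_, rfl⟩
    have hts : t ^ 3 * s = 1 :=
      calc t ^ 3 * s = g₂ ^ 3 * s ^ 4 := by rw [ht, mul_pow]; group
        _ = (g₁ * s ^ 2) ^ 2 := by rw [hg, mul_pow, ← pow_mul]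
        _ = 1 := by rw [h₂, one_pow]
    have hs : s = t ^ (-3 : ℤ) := by
      rw [eq_inv_of_mul_eq_one_right hts]; group
    have hg₁ : g₁ = t ^ 6 := by
      rw [eq_inv_of_mul_eq_one_left h₂, hs]; group
    have hg₂ : g₂ = t ^ 4 := by
      rw [eq_mul_inv_of_mul_eq ht.symm, hs]; group
    exact ⟨t, by rw [zpowTripleHom_apply, hg₁, hg₂, ← hs]⟩
end

/-- The map λ ↦ (λ^6, λ^4, λ^{-3}) is a group isomorphism from ℂ* onto the subgroup
G = {(γ1, γ2, s1) ∈ (ℂ*)³ : γ1²γ2⁻³ = 1, γ1 s1² = 1}. -/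
theorem stmt4 :
    ∃ φ : ℂˣ →* ℂˣ × ℂˣ × ℂˣ,
      (∀ l : ℂˣ, φ l = (l ^ 6, l ^ 4, l ^ (-3 : ℤ))) ∧
      Function.Injective φ ∧
      Set.range φ =
        {p : ℂˣ × ℂˣ × ℂˣ | p.1 ^ 2 * p.2.1 ^ (-3 : ℤ) = 1 ∧ p.1 * p.2.2 ^ 2 = 1} :=
  ⟨zpowTripleHom ℂˣ, zpowTripleHom_apply, zpowTripleHom_injective,
    Set.ext fun _ => mem_range_zpowTripleHom_iff⟩
end

section
/- The map ℤ[x1,x2] → ℤ[t]/(6t^2) given by x1 ↦ 3t, x2 ↦ 2t has kernel containing the ideal (2x1 - 3x2, x1 x2), and the induced map ℤ[x1,x2]/(2x1 - 3x2, x1 x2) → ℤ[t]/(6t^2) is injective, with image the subring generated by 2t and 3t. -/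
set_option maxHeartbeats 1000000

/-- The ring map ℤ[x1,x2] → ℤ[t]/(6t²), x1 ↦ 3t, x2 ↦ 2t, has kernel exactly the ideal
(2x1 - 3x2, x1x2), and its range is the subring generated by 2t and 3t. -/
theorem stmt13
    (φ : MvPolynomial (Fin 2) ℤ →+*
        (Polynomial ℤ ⧸ Ideal.span {(6 : Polynomial ℤ) * Polynomial.X ^ 2}))
    (hφ : ∀ p, φ p = MvPolynomial.aeval
      ![3 * Ideal.Quotient.mk (Ideal.span {(6 : Polynomial ℤ) * Polynomial.X ^ 2}) Polynomial.X,
        2 * Ideal.Quotient.mk (Ideal.span {(6 : Polynomial ℤ) * Polynomial.X ^ 2}) Polynomial.X] p) :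
    RingHom.ker φ =
      Ideal.span {2 * MvPolynomial.X 0 - 3 * MvPolynomial.X 1,
        MvPolynomial.X 0 * MvPolynomial.X 1} ∧
    φ.range = Subring.closure
      {2 * Ideal.Quotient.mk (Ideal.span {(6 : Polynomial ℤ) * Polynomial.X ^ 2}) Polynomial.X,
       3 * Ideal.Quotient.mk (Ideal.span {(6 : Polynomial ℤ) * Polynomial.X ^ 2}) Polynomial.X} := by
  have hφeq : φ = (MvPolynomial.aeval
      ![3 * Ideal.Quotient.mk (Ideal.span {(6 : Polynomial ℤ) * Polynomial.X ^ 2}) Polynomial.X,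
        2 * Ideal.Quotient.mk (Ideal.span {(6 : Polynomial ℤ) * Polynomial.X ^ 2})
          Polynomial.X]).toRingHom := RingHom.ext fun p => hφ p
  clear hφ
  subst hφeq
  set Q : Ideal (Polynomial ℤ) := Ideal.span {(6 : Polynomial ℤ) * Polynomial.X ^ 2} with hQ
  set mkQ : Polynomial ℤ →+* Polynomial ℤ ⧸ Q := Ideal.Quotient.mk Q with hmkQ
  set t : Polynomial ℤ ⧸ Q := mkQ Polynomial.X with htdef
  set I : Ideal (MvPolynomial (Fin 2) ℤ) :=
    Ideal.span {2 * MvPolynomial.X 0 - 3 * MvPolynomial.X 1,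
      MvPolynomial.X 0 * MvPolynomial.X 1} with hI
  set π : MvPolynomial (Fin 2) ℤ →+* MvPolynomial (Fin 2) ℤ ⧸ I := Ideal.Quotient.mk I with hπ
  set φ : MvPolynomial (Fin 2) ℤ →+* Polynomial ℤ ⧸ Q :=
    (MvPolynomial.aeval ![3 * t, 2 * t]).toRingHom with hφdef
  -- basic values of φ
  have hφ0 : φ (MvPolynomial.X 0) = 3 * t := by simp [hφdef]
  have hφ1 : φ (MvPolynomial.X 1) = 2 * t := by simp [hφdef]
  have ht2 : (6 : Polynomial ℤ ⧸ Q) * t ^ 2 = 0 := by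
    have hmem : ((6 : Polynomial ℤ) * Polynomial.X ^ 2 : Polynomial ℤ) ∈ Q :=
      Ideal.subset_span (Set.mem_singleton _)
    have h0 : mkQ ((6 : Polynomial ℤ) * Polynomial.X ^ 2) = 0 :=
      (Ideal.Quotient.eq_zero_iff_mem).2 hmem
    calc (6 : Polynomial ℤ ⧸ Q) * t ^ 2
        = mkQ ((6 : Polynomial ℤ) * Polynomial.X ^ 2) := by
          rw [map_mul, map_pow, ← htdef, map_ofNat]
      _ = 0 := h0
  -- the two generators are in the kernel
  have hker1 : φ (2 * MvPolynomial.X 0 - 3 * MvPolynomial.X 1) = 0 := by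
    simp only [map_sub, map_mul, hφ0, hφ1, map_ofNat]
    ring
  have hker2 : φ (MvPolynomial.X 0 * MvPolynomial.X 1) = 0 := by
    simp only [map_mul, hφ0, hφ1]
    calc 3 * t * (2 * t) = 6 * t ^ 2 := by ring
      _ = 0 := ht2
  -- the retraction, sending t to x0 - x1
  set u : MvPolynomial (Fin 2) ℤ ⧸ I := π (MvPolynomial.X 0 - MvPolynomial.X 1) with hu
  have hu2 : (6 : MvPolynomial (Fin 2) ℤ ⧸ I) * u ^ 2 = 0 := by
    have hmem : (6 : MvPolynomial (Fin 2) ℤ) *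
        (MvPolynomial.X 0 - MvPolynomial.X 1) ^ 2 ∈ I := by
      rw [hI, Ideal.mem_span_pair]
      exact ⟨3 * MvPolynomial.X 0 - 2 * MvPolynomial.X 1, 1, by ring⟩
    have h0 : π ((6 : MvPolynomial (Fin 2) ℤ) *
        (MvPolynomial.X 0 - MvPolynomial.X 1) ^ 2) = 0 :=
      (Ideal.Quotient.eq_zero_iff_mem).2 hmem
    calc (6 : MvPolynomial (Fin 2) ℤ ⧸ I) * u ^ 2
        = π ((6 : MvPolynomial (Fin 2) ℤ) * (MvPolynomial.X 0 - MvPolynomial.X 1) ^ 2) := by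
          rw [map_mul, map_pow, ← hu, map_ofNat]
      _ = 0 := h0
  set av : Polynomial ℤ →+* MvPolynomial (Fin 2) ℤ ⧸ I :=
    (Polynomial.aeval u).toRingHom with hav
  have havX : av Polynomial.X = u := by simp [hav]
  have hvanish : ∀ a ∈ Q, av a = 0 := by
    intro a ha
    rw [hQ, Ideal.mem_span_singleton] at ha
    obtain ⟨c, rfl⟩ := ha
    rw [map_mul]
    have h6 : av ((6 : Polynomial ℤ) * Polynomial.X ^ 2) = 0 := by
      rw [map_mul, map_pow, havX, map_ofNat]
      exact hu2
    rw [h6, zero_mul]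
  set Ψ : (Polynomial ℤ ⧸ Q) →+* MvPolynomial (Fin 2) ℤ ⧸ I :=
    Ideal.Quotient.lift Q av hvanish with hΨ
  have hΨt : Ψ t = u := by
    rw [htdef, hΨ, hmkQ, Ideal.Quotient.lift_mk, havX]
  -- Ψ ∘ φ = π
  have hgen1 : (2 * MvPolynomial.X 0 - 3 * MvPolynomial.X 1 : MvPolynomial (Fin 2) ℤ) ∈ I :=
    Ideal.subset_span (Set.mem_insert _ _)
  have hcomp : Ψ.comp φ = π := by
    apply MvPolynomial.ringHom_ext
    · intro a
      have h1 : (Ψ.comp φ) (MvPolynomial.C a) = (a : MvPolynomial (Fin 2) ℤ ⧸ I) := by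
        rw [RingHom.comp_apply, hφdef]
        simp [map_intCast]
      rw [h1, hπ, ← map_intCast (Ideal.Quotient.mk I) a]
      congr 1
    · intro i
      fin_cases i
      · rw [RingHom.comp_apply]
        show Ψ (φ (MvPolynomial.X 0)) = π (MvPolynomial.X 0)
        rw [hφ0, map_mul, hΨt, map_ofNat, hu, hπ, ← map_ofNat (Ideal.Quotient.mk I) 3,
          ← map_mul]
        rw [Ideal.Quotient.mk_eq_mk_iff_sub_mem]
        have heq : (3 : MvPolynomial (Fin 2) ℤ) * (MvPolynomial.X 0 - MvPolynomial.X 1) -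
            MvPolynomial.X 0 = 2 * MvPolynomial.X 0 - 3 * MvPolynomial.X 1 := by ring
        rw [heq]; exact hgen1
      · rw [RingHom.comp_apply]
        show Ψ (φ (MvPolynomial.X 1)) = π (MvPolynomial.X 1)
        rw [hφ1, map_mul, hΨt, map_ofNat, hu, hπ, ← map_ofNat (Ideal.Quotient.mk I) 2,
          ← map_mul]
        rw [Ideal.Quotient.mk_eq_mk_iff_sub_mem]
        have heq : (2 : MvPolynomial (Fin 2) ℤ) * (MvPolynomial.X 0 - MvPolynomial.X 1) -
            MvPolynomial.X 1 = 2 * MvPolynomial.X 0 - 3 * MvPolynomial.X 1 := by ring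
        rw [heq]; exact hgen1
  -- kernel is exactly I
  have hker : RingHom.ker φ = I := by
    apply le_antisymm
    · intro p hp
      rw [RingHom.mem_ker] at hp
      have h0 : π p = 0 := by
        rw [← RingHom.congr_fun hcomp p, RingHom.comp_apply, hp, map_zero]
      rw [hπ] at h0
      exact Ideal.Quotient.eq_zero_iff_mem.1 h0
    · rw [hI, Ideal.span_le, Set.insert_subset_iff, Set.singleton_subset_iff]
      exact ⟨RingHom.mem_ker.2 hker1, RingHom.mem_ker.2 hker2⟩
  -- range is everything
  have hsurj : φ.range = ⊤ := by
    rw [RingHom.range_eq_top]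
    intro y
    obtain ⟨q, rfl⟩ := Ideal.Quotient.mk_surjective y
    refine ⟨Polynomial.aeval
      (MvPolynomial.X 0 - MvPolynomial.X 1 : MvPolynomial (Fin 2) ℤ) q, ?_⟩
    have : φ.comp (Polynomial.aeval
        (MvPolynomial.X 0 - MvPolynomial.X 1 : MvPolynomial (Fin 2) ℤ)).toRingHom = mkQ := by
      apply Polynomial.ringHom_ext
      · intro a
        rw [RingHom.comp_apply]
        simp only [AlgHom.toRingHom_eq_coe, RingHom.coe_coe, Polynomial.aeval_C]
        rw [hφdef]
        simp [map_intCast]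
      · rw [RingHom.comp_apply]
        simp only [AlgHom.toRingHom_eq_coe, RingHom.coe_coe, Polynomial.aeval_X]
        rw [map_sub, hφ0, hφ1, ← htdef]
        ring
    exact RingHom.congr_fun this q
  -- closure is everything
  have htmem : t ∈ Subring.closure {2 * t, 3 * t} := by
    have h3 : (3 : Polynomial ℤ ⧸ Q) * t ∈ Subring.closure {2 * t, 3 * t} :=
      Subring.subset_closure (Set.mem_insert_iff.2 (Or.inr rfl))
    have h2 : (2 : Polynomial ℤ ⧸ Q) * t ∈ Subring.closure {2 * t, 3 * t} :=
      Subring.subset_closure (Set.mem_insert _ _)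
    have hsub := sub_mem h3 h2
    have heq : 3 * t - 2 * t = t := by ring
    rwa [heq] at hsub
  have hclo : Subring.closure {2 * t, 3 * t} = ⊤ := by
    rw [eq_top_iff]
    intro x hx
    clear hx
    obtain ⟨q, rfl⟩ := Ideal.Quotient.mk_surjective x
    induction q using Polynomial.induction_on with
    | C a =>
      have : (Ideal.Quotient.mk Q) (Polynomial.C a) = (a : Polynomial ℤ ⧸ Q) := by
        rw [← map_intCast (Ideal.Quotient.mk Q) a]
        congr 1
      rw [this]
      exact intCast_mem _ a
    | add p q hp hq =>
      rw [map_add]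
      exact add_mem hp hq
    | monomial n a ih =>
      have heq : Polynomial.C a * Polynomial.X ^ (n + 1) =
          Polynomial.C a * Polynomial.X ^ n * Polynomial.X := by
        rw [pow_succ, mul_assoc]
      rw [heq, map_mul]
      exact mul_mem ih htmem
  exact ⟨hker, by rw [hsurj, hclo]⟩
end
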